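/- If A is the weighted adjacency matrix of a DAG on d nodes, then A is nilpotent: A^d = 0, and consequently trace(e^{A∘A}) = d if and only if the graph defined by the nonzero entries of A is acyclic (where ∘ denotes entrywise squaring/Hadamard product). -/

import Mathlib

/-!
If a permutation `σ` makes `A` strictly triangular, every step `i → k` of a walk with nonzero
weights raises `σ` by at least one, so `(A ^ n) i j ≠ 0` forces `σ i + n ≤ σ j`; with `n = d`
this is impossible, hence `A ^ d = 0`.

For the NOTEARS characterisation put `B = A ∘ A`: it is entrywise nonnegative and has the same
support as `A`. Expanding the exponential, `trace (exp B) = d + ∑_{n ≥ 1} trace (B ^ n) / n!`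
with nonnegative terms, so `trace (exp B) = d` iff every diagonal entry of every `B ^ n`, `n ≥ 1`,
vanishes, i.e. iff the graph of `A` has no closed walk. An acyclic graph in turn has a
topological order (a linear extension of its reachability order, by Szpilrajn's theorem), and
numbering the vertices along it is the required permutation.
-/

open Matrix Relation
open scoped Nat

theorem exists_equiv_fin_lt_of_irrefl_transGen {α : Type*} [Fintype α] {r : α → α → Prop}
    (hr : ∀ a, ¬ TransGen r a a) :
    ∃ σ : α ≃ Fin (Fintype.card α), ∀ a b, r a b → σ a < σ b := by
  have : IsStrictOrder α (TransGen r) := { irrefl := hr, trans := fun _ _ _ => TransGen.trans }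
  let := partialOrderOfSO (TransGen r)
  let : Fintype (LinearExtension α) := ‹Fintype α›
  let e : LinearExtension α ≃o Fin (Fintype.card α) :=
    (Fintype.orderIsoFinOfCardEq (LinearExtension α) rfl).symm
  refine ⟨e.toEquiv, fun a b hab => e.lt_iff_lt.2 ?_⟩
  exact toLinearExtension.monotone.strictMono_of_injective (fun _ _ h => h) (TransGen.single hab)

namespace Matrix

variable {ι α R : Type*}

def StrictBlockTriangular [Zero R] [LE α] (M : Matrix ι ι R) (b : ι → α) : Prop :=
  ∀ i j, b j ≤ b i → M i j = 0

theorem StrictBlockTriangular.hadamard [MulZeroClass R] {M : Matrix ι ι R} {b : ι → α} [LE α]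
    (hM : M.StrictBlockTriangular b) (N : Matrix ι ι R) : (M ⊙ N).StrictBlockTriangular b :=
  fun i j hji => by simp [hM i j hji]

theorem exists_perm_strictBlockTriangular_of_acyclic {d : ℕ} [Zero R]
    (A : Matrix (Fin d) (Fin d) R) (hA : ∀ i, ¬ TransGen (fun i j => A i j ≠ 0) i i) :
    ∃ σ : Equiv.Perm (Fin d), A.StrictBlockTriangular σ := by
  obtain ⟨σ, hσ⟩ := exists_equiv_fin_lt_of_irrefl_transGen hA
  refine ⟨σ.trans (finCongr (Fintype.card_fin d)), fun i j hji => by_contra fun hij => ?_⟩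
  have : (σ j : ℕ) ≤ σ i := hji
  exact (hσ i j hij).not_ge this

variable [Fintype ι]

theorem trace_eq_zero_iff_of_nonneg [AddCommMonoid R] [PartialOrder R] [IsOrderedAddMonoid R]
    {M : Matrix ι ι R} (hM : ∀ i, 0 ≤ M i i) : trace M = 0 ↔ ∀ i, M i i = 0 := by
  simpa [trace] using Finset.sum_eq_zero_iff_of_nonneg fun i (_ : i ∈ Finset.univ) => hM i

variable [DecidableEq ι]

theorem StrictBlockTriangular.pow_apply_eq_zero [Semiring R] {M : Matrix ι ι R} {b : ι → ℕ}
    (hM : M.StrictBlockTriangular b) {n : ℕ} {i j : ι} (h : b j < b i + n) :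
    (M ^ n) i j = 0 := by
  induction n generalizing i with
  | zero => exact one_apply_ne (by rintro rfl; omega)
  | succ n ih =>
    rw [pow_succ', mul_apply]
    refine Finset.sum_eq_zero fun k _ => ?_
    rcases le_or_gt (b k) (b i) with hki | hik
    · rw [hM i k hki, zero_mul]
    · rw [ih (by omega), mul_zero]

theorem StrictBlockTriangular.pow_eq_zero [Semiring R] {M : Matrix ι ι R} {m : ℕ} {b : ι → Fin m}
    (hM : M.StrictBlockTriangular b) : M ^ m = 0 := by
  ext i j
  exact StrictBlockTriangular.pow_apply_eq_zero (b := fun i => b i) hM (by omega)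

theorem exists_pow_succ_apply_pos_of_transGen [Semiring R] [PartialOrder R]
    [IsStrictOrderedRing R] {B : Matrix ι ι R} (hB : ∀ i j, 0 ≤ B i j) {i j : ι}
    (h : TransGen (fun a b => 0 < B a b) i j) : ∃ n, 0 < (B ^ (n + 1)) i j := by
  induction h with
  | single hij => exact ⟨0, by simpa using hij⟩
  | @tail k l _ hkl ih =>
    obtain ⟨n, hn⟩ := ih
    refine ⟨n + 1, ?_⟩
    rw [pow_succ, mul_apply]
    exact Finset.sum_pos' (fun m _ => mul_nonneg (pow_apply_nonneg hB _ _ _) (hB m l))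
      ⟨k, Finset.mem_univ k, mul_pos hn hkl⟩

theorem hasSum_trace_exp (B : Matrix ι ι ℝ) :
    HasSum (fun n => (n !⁻¹ : ℝ) * trace (B ^ n)) (trace (NormedSpace.exp B)) := by
  -- any submultiplicative norm will do; it is only used to expand `exp` as a power series
  let : NormedRing (Matrix ι ι ℝ) := Matrix.linftyOpNormedRing
  let : NormedAlgebra ℝ (Matrix ι ι ℝ) := Matrix.linftyOpNormedAlgebra
  have h : HasSum (fun n => (n !⁻¹ : ℝ) • B ^ n) (NormedSpace.exp B) :=
    NormedSpace.exp_series_hasSum_exp' B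
  simpa using h.mapL (traceLinearMap ι ℝ ℝ).toContinuousLinearMap

theorem trace_exp_eq_card_iff {B : Matrix ι ι ℝ} (hB : ∀ i j, 0 ≤ B i j) :
    trace (NormedSpace.exp B) = Fintype.card ι ↔ ∀ n i, (B ^ (n + 1)) i i = 0 := by
  have hsum := (hasSum_nat_add_iff' 1).2 (hasSum_trace_exp B)
  simp only [Finset.range_one, Finset.sum_singleton, pow_zero, trace_one, Nat.factorial_zero,
    Nat.cast_one, inv_one, one_mul] at hsum
  have htrace (n : ℕ) := trace_eq_zero_iff_of_nonneg fun i => pow_apply_nonneg hB (n + 1) i i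
  have hterm (n : ℕ) : 0 ≤ ((n + 1)! : ℝ)⁻¹ * trace (B ^ (n + 1)) :=
    mul_nonneg (by positivity) (Finset.sum_nonneg fun i _ => pow_apply_nonneg hB _ i i)
  have hsum_zero : trace (NormedSpace.exp B) - Fintype.card ι = 0 ↔
      HasSum (fun n => ((n + 1)! : ℝ)⁻¹ * trace (B ^ (n + 1))) 0 :=
    ⟨fun h => h ▸ hsum, hsum.unique⟩
  rw [← sub_eq_zero, hsum_zero, hasSum_zero_iff_of_nonneg hterm, funext_iff]
  simp [Nat.factorial_ne_zero, htrace]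

end Matrix

/-- If A is the weighted adjacency matrix of a DAG on d nodes (some permutation makes
it strictly triangular) then A is nilpotent with A^d = 0; and the NOTEARS
characterization holds: trace(e^{A∘A}) = d iff the graph of nonzero entries of A is
acyclic (iff some permutation makes A strictly triangular). -/
theorem dag_nilpotent_and_notears {d : ℕ} (A : Matrix (Fin d) (Fin d) ℝ) :
    ((∃ σ : Equiv.Perm (Fin d), ∀ i j : Fin d, σ j ≤ σ i → A i j = 0) → A ^ d = 0) ∧
    (Matrix.trace (NormedSpace.exp (Matrix.hadamard A A)) = (d : ℝ) ↔
      ∃ σ : Equiv.Perm (Fin d), ∀ i j : Fin d, σ j ≤ σ i → A i j = 0) := by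
  set B := A ⊙ A
  have hB (i j) : 0 ≤ B i j := mul_self_nonneg (A i j)
  refine ⟨fun ⟨σ, hσ⟩ => StrictBlockTriangular.pow_eq_zero hσ, ?_⟩
  have hexp := trace_exp_eq_card_iff hB
  rw [Fintype.card_fin] at hexp
  rw [hexp]
  constructor
  · intro hdiag
    refine exists_perm_strictBlockTriangular_of_acyclic A fun i hcycle => ?_
    have hBcycle : TransGen (fun a b => 0 < B a b) i i :=
      TransGen.mono (fun a b hab => mul_self_pos.2 hab) _ _ hcycle
    obtain ⟨n, hn⟩ := exists_pow_succ_apply_pos_of_transGen hB hBcycle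
    exact hn.ne' (hdiag n i)
  · rintro ⟨σ, hσ⟩ n i
    exact StrictBlockTriangular.pow_apply_eq_zero (b := fun i => (σ i : ℕ))
      (StrictBlockTriangular.hadamard hσ A) (by omega)
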